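/- arXiv:2507.06953 — 2 statements merged into one kernel-verified Lean document; each statement's English description precedes it below -/
import Mathlib

section
/- There exists a finitely generated nilpotent group G together with a positive cone P of G such that P is condensed for the conjugation action: for every finite subset F ⊆ P there exists g ∈ G with g⁻¹Pg ≠ P and F ⊆ g⁻¹Pg. (Equivalently, there exists a nilpotent left-orderable group G for which E_lo(G) is not smooth.) -/
/-- A positive cone of a group `G`: a subsemigroup `P` such that `G` is the disjoint
union of `P`, `P⁻¹` and `{1}`. -/
def IsPositiveCone {G : Type*} [Group G] (P : Set G) : Prop :=
  (∀ a ∈ P, ∀ b ∈ P, a * b ∈ P) ∧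
  (∀ g : G, g ∈ P ∨ g⁻¹ ∈ P ∨ g = 1) ∧
  (∀ g ∈ P, g⁻¹ ∉ P) ∧
  (1 : G) ∉ P

/-- The conjugate `g⁻¹ P g` of a subset `P` of a group. -/
def conjCone {G : Type*} [Group G] (g : G) (P : Set G) : Set G :=
  (fun p => g⁻¹ * p * g) '' P

/-- A positive cone is condensed (for the conjugation action) if every finite subset
of it is contained in some conjugate of `P` different from `P`. -/
def IsCondensedCone {G : Type*} [Group G] (P : Set G) : Prop :=
  ∀ F : Finset G, ↑F ⊆ P → ∃ g : G, conjCone g P ≠ P ∧ ↑F ⊆ conjCone g P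

/-
The group `ℤ³ ⋊ ℤ²`, where `(b, c)` acts on `(x, y, z)` by `(x + c z, y + b z, z)`, is nilpotent
of class 2. Order it lexicographically: first by `(b, c) ∈ ℤ²`, then on the kernel `ℤ³` by the
sign of `x + √2 y`, ties broken by `z`. Conjugation by `(b, c)` fixes the first layer and replaces
`x + √2 y` by `x + √2 y + (c + √2 b) z`. As `c + √2 b` takes arbitrarily small positive values,
every finite subset of the cone survives a small enough such shift, while the shift always adds a
kernel element with `z = 1` and `x + √2 y` slightly negative.
-/

open Filter Topology Function

section PositiveCone

variable {G H : Type*} [Group G] [Group H]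

theorem isPositiveCone_setOf_one_lt [LinearOrder H] [MulLeftMono H] :
    IsPositiveCone {h : H | 1 < h} := by
  refine ⟨fun _ ha _ hb => one_lt_mul' ha hb, fun h => ?_,
    fun _ hg hg' => (one_lt_inv'.1 hg').asymm hg, lt_irrefl 1⟩
  rcases lt_trichotomy 1 h with h1 | rfl | h1
  · exact .inl h1
  · exact .inr (.inr rfl)
  · exact .inr (.inl (one_lt_inv'.2 h1))

theorem IsPositiveCone.preimage {P : Set H} (hP : IsPositiveCone P) (f : G →* H)
    (hf : Injective f) : IsPositiveCone (f ⁻¹' P) := by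
  obtain ⟨hmul, htri, hasymm, hone⟩ := hP
  refine ⟨fun a ha b hb => ?_, fun g => ?_, fun g hg hg' => hasymm _ hg (by simpa using hg'),
    by simpa using hone⟩
  · simpa using hmul _ ha _ hb
  · rcases htri (f g) with h | h | h
    · exact .inl h
    · exact .inr (.inl (by simpa using h))
    · exact .inr (.inr (hf (h.trans f.map_one.symm)))

theorem IsPositiveCone.lex {P : Set H} (hP : IsPositiveCone P) (φ : G →* H) {Q : Set φ.ker}
    (hQ : IsPositiveCone Q) : IsPositiveCone (φ ⁻¹' P ∪ (↑) '' Q) := by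
  obtain ⟨hmul, htri, hasymm, hone⟩ := hP
  obtain ⟨hmulQ, htriQ, hasymmQ, honeQ⟩ := hQ
  have hker : ∀ g ∈ ((↑) '' Q : Set G), φ g = 1 := by
    rintro _ ⟨k, -, rfl⟩
    exact k.2
  refine ⟨?_, fun g => ?_, ?_, ?_⟩
  · rintro a (ha | ha) b (hb | hb)
    · exact .inl (by simpa using hmul _ ha _ hb)
    · exact .inl (by simpa [hker b hb] using ha)
    · exact .inl (by simpa [hker a ha] using hb)
    · obtain ⟨k, hk, rfl⟩ := ha
      obtain ⟨l, hl, rfl⟩ := hb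
      exact .inr ⟨k * l, hmulQ _ hk _ hl, rfl⟩
  · rcases htri (φ g) with h | h | h
    · exact .inl (.inl h)
    · exact .inr (.inl (.inl (by simpa using h)))
    · rcases htriQ ⟨g, h⟩ with h' | h' | h'
      · exact .inl (.inr ⟨_, h', rfl⟩)
      · exact .inr (.inl (.inr ⟨_, h', rfl⟩))
      · exact .inr (.inr (congrArg Subtype.val h'))
  · rintro g (hg | hg) (hg' | hg')
    · exact hasymm _ hg (by simpa using hg')
    · exact hone (by simpa [inv_eq_one.1 (by simpa using hker _ hg')] using hg)
    · exact hone (by simpa [hker _ hg] using hg')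
    · obtain ⟨k, hk, rfl⟩ := hg
      obtain ⟨l, hl, hlk⟩ := hg'
      obtain rfl : l = k⁻¹ := Subtype.ext hlk
      exact hasymmQ k hk hl
  · rintro (h | ⟨k, hk, hk1⟩)
    · exact hone (by simpa using h)
    · obtain rfl : k = 1 := Subtype.ext hk1
      exact honeQ hk

theorem mem_conjCone {g x : G} {P : Set G} : x ∈ conjCone g P ↔ g * x * g⁻¹ ∈ P :=
  ⟨by rintro ⟨p, hp, rfl⟩; simpa [mul_assoc] using hp,
    fun h => ⟨_, h, by simp [mul_assoc]⟩⟩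

theorem conjCone_preimage {H : Type*} [CommGroup H] (φ : G →* H) (g : G) (P : Set H) :
    conjCone g (φ ⁻¹' P) = φ ⁻¹' P := by
  ext x
  simp [mem_conjCone, mul_comm (φ g)]

theorem IsCondensedCone.preimage_union {H : Type*} [CommGroup H] (φ : G →* H) {P : Set H}
    (hP : 1 ∉ P) {Q : Set G} (hQker : Q ⊆ φ.ker) (hQ : IsCondensedCone Q) :
    IsCondensedCone (φ ⁻¹' P ∪ Q) := by
  classical
  intro F hF
  obtain ⟨g, hne, hsub⟩ := hQ (F.filter (· ∈ Q)) (by simp [Set.subset_def])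
  have hconj : conjCone g (φ ⁻¹' P ∪ Q) = φ ⁻¹' P ∪ conjCone g Q := by
    rw [conjCone, Set.image_union, ← conjCone, ← conjCone, conjCone_preimage]
  have hdisj : ∀ R ⊆ (φ.ker : Set G), φ ⁻¹' P ∩ R ⊆ ∅ := fun R hR x ⟨hxP, hxR⟩ =>
    hP (by simpa [MonoidHom.mem_ker.1 (hR hxR)] using hxP)
  have hconjker : conjCone g Q ⊆ φ.ker := by
    rintro _ ⟨q, hq, rfl⟩
    simp [MonoidHom.mem_ker.1 (hQker hq)]
  refine ⟨g, fun h => hne ?_, fun x hx => ?_⟩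
  · calc conjCone g Q = (φ ⁻¹' P ∪ conjCone g Q) \ φ ⁻¹' P :=
          (Set.union_sdiff_cancel_left (hdisj _ hconjker)).symm
      _ = (φ ⁻¹' P ∪ Q) \ φ ⁻¹' P := by rw [← hconj, h]
      _ = Q := Set.union_sdiff_cancel_left (hdisj _ hQker)
  · rw [hconj]
    rcases hF hx with h | h
    · exact .inl h
    · exact .inr (hsub (by simpa using And.intro hx h))

end PositiveCone

theorem denseRange_int_add_sqrt_two_mul :
    DenseRange fun p : ℤ × ℤ => (p.1 : ℝ) + √2 * p.2 := by
  have hdense : Dense (AddSubgroup.closure {1, √2} : Set ℝ) :=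
    dense_addSubgroupClosure_pair_iff.2 (by simpa using irrational_sqrt_two.inv)
  refine hdense.mono ?_
  rintro _ hx
  obtain ⟨m, n, rfl⟩ := AddSubgroup.mem_closure_pair.1 hx
  exact ⟨(m, n), by simp [mul_comm]⟩

theorem eq_zero_of_int_add_sqrt_two_mul_eq_zero {m n : ℤ} (h : (m : ℝ) + √2 * n = 0) :
    m = 0 ∧ n = 0 := by
  obtain rfl : n = 0 := by
    by_contra hn
    exact (irrational_sqrt_two.mul_intCast hn).ne_int (-m) (by push_cast; linarith)
  exact ⟨by simpa using h, rfl⟩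

theorem eventually_pos_add_mul {s t : ℝ} (h : 0 < s ∨ s = 0 ∧ 0 < t) :
    ∀ᶠ ε in 𝓝[>] 0, 0 < s + ε * t := by
  rcases h with hs | ⟨rfl, ht⟩
  · have hcont : Continuous fun ε : ℝ => s + ε * t := by fun_prop
    exact nhdsWithin_le_nhds (hcont.tendsto' 0 s (by simp) |>.eventually_const_lt hs)
  · filter_upwards [self_mem_nhdsWithin] with ε hε
    simpa using mul_pos hε ht

/-- `ℤ³ ⋊ ℤ²`, where `(b, c) ∈ ℤ²` acts on `(x, y, z) ∈ ℤ³` by the commuting shears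
`(x, y, z) ↦ (x + c z, y + b z, z)`. -/
@[ext]
structure ShearGroup where
  x : ℤ
  y : ℤ
  z : ℤ
  b : ℤ
  c : ℤ

namespace ShearGroup

instance : Mul ShearGroup :=
  ⟨fun g h => ⟨g.x + h.x + g.c * h.z, g.y + h.y + g.b * h.z, g.z + h.z, g.b + h.b, g.c + h.c⟩⟩

instance : One ShearGroup := ⟨⟨0, 0, 0, 0, 0⟩⟩

instance : Inv ShearGroup :=
  ⟨fun g => ⟨-g.x + g.c * g.z, -g.y + g.b * g.z, -g.z, -g.b, -g.c⟩⟩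

section Simp

variable (g h : ShearGroup)

@[simp] theorem mul_x : (g * h).x = g.x + h.x + g.c * h.z := rfl
@[simp] theorem mul_y : (g * h).y = g.y + h.y + g.b * h.z := rfl
@[simp] theorem mul_z : (g * h).z = g.z + h.z := rfl
@[simp] theorem mul_b : (g * h).b = g.b + h.b := rfl
@[simp] theorem mul_c : (g * h).c = g.c + h.c := rfl
@[simp] theorem one_x : (1 : ShearGroup).x = 0 := rfl
@[simp] theorem one_y : (1 : ShearGroup).y = 0 := rfl
@[simp] theorem one_z : (1 : ShearGroup).z = 0 := rfl
@[simp] theorem one_b : (1 : ShearGroup).b = 0 := rfl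
@[simp] theorem one_c : (1 : ShearGroup).c = 0 := rfl
@[simp] theorem inv_x : g⁻¹.x = -g.x + g.c * g.z := rfl
@[simp] theorem inv_y : g⁻¹.y = -g.y + g.b * g.z := rfl
@[simp] theorem inv_z : g⁻¹.z = -g.z := rfl
@[simp] theorem inv_b : g⁻¹.b = -g.b := rfl
@[simp] theorem inv_c : g⁻¹.c = -g.c := rfl

end Simp

instance : Group ShearGroup where
  mul_assoc _ _ _ := by ext <;> simp <;> ring
  one_mul _ := by ext <;> simp
  mul_one _ := by ext <;> simp
  inv_mul_cancel _ := by ext <;> simp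

theorem mul_mul_inv (g q : ShearGroup) :
    g * q * g⁻¹ = ⟨q.x + g.c * q.z - q.c * g.z, q.y + g.b * q.z - q.b * g.z, q.z, q.b, q.c⟩ := by
  ext <;> simp <;> ring

def ofKer : Multiplicative (ℤ × ℤ × ℤ) →* ShearGroup where
  toFun v := ⟨v.toAdd.1, v.toAdd.2.1, v.toAdd.2.2, 0, 0⟩
  map_one' := rfl
  map_mul' _ _ := by ext <;> simp

def ofShear : Multiplicative (ℤ × ℤ) →* ShearGroup where
  toFun v := ⟨0, 0, 0, v.toAdd.1, v.toAdd.2⟩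
  map_one' := rfl
  map_mul' _ _ := by ext <;> simp

theorem fg : Group.FG ShearGroup := by
  have hrange : ofKer.range ⊔ ofShear.range = ⊤ := eq_top_iff.2 fun g _ => by
    rw [show g = ofKer (.ofAdd (g.x, g.y, g.z)) * ofShear (.ofAdd (g.b, g.c)) by
      ext <;> simp [ofKer, ofShear]]
    exact mul_mem (Subgroup.mem_sup_left ⟨_, rfl⟩) (Subgroup.mem_sup_right ⟨_, rfl⟩)
  rw [Group.fg_def, ← hrange]
  exact ((Group.fg_iff_subgroup_fg _).1 inferInstance).sup
    ((Group.fg_iff_subgroup_fg _).1 inferInstance)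

def toZBC : ShearGroup →* Multiplicative (ℤ × ℤ × ℤ) where
  toFun g := .ofAdd (g.z, g.b, g.c)
  map_one' := rfl
  map_mul' _ _ := rfl

theorem isNilpotent : Group.IsNilpotent ShearGroup := by
  refine Subgroup.isNilpotent_of_ker_le_center toZBC fun g hg => ?_
  obtain ⟨hz, hb, hc⟩ : g.z = 0 ∧ g.b = 0 ∧ g.c = 0 := by simpa [toZBC] using hg
  exact Subgroup.mem_center_iff.2 fun h => by ext <;> simp [hz, hb, hc, add_comm]

def toShear : ShearGroup →* Multiplicative (ℤ ×ₗ ℤ) where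
  toFun g := .ofAdd (toLex (g.b, g.c))
  map_one' := rfl
  map_mul' _ _ := rfl

theorem mem_ker_toShear {g : ShearGroup} : g ∈ toShear.ker ↔ g.b = 0 ∧ g.c = 0 := by
  change Multiplicative.ofAdd (toLex (g.b, g.c)) = 1 ↔ _
  simp

noncomputable def weight (g : ShearGroup) : ℝ := g.x + √2 * g.y

noncomputable def kerCoord : toShear.ker →* Multiplicative (ℝ ×ₗ ℤ) where
  toFun k := .ofAdd (toLex (weight k, k.1.z))
  map_one' := by simp [weight]
  map_mul' k l := by
    obtain ⟨hb, hc⟩ := mem_ker_toShear.1 k.2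
    simp only [weight, Subgroup.coe_mul, mul_x, mul_y, mul_z, hb, hc, zero_mul, add_zero, ← ofAdd_add, ← toLex_add, Prod.mk_add_mk]
    push_cast
    ring_nf

theorem kerCoord_injective : Injective kerCoord := by
  refine (injective_iff_map_eq_one kerCoord).2 fun k hk => ?_
  obtain ⟨hw, hz⟩ : weight k = 0 ∧ k.1.z = 0 := by simpa [kerCoord] using hk
  obtain ⟨hx, hy⟩ := eq_zero_of_int_add_sqrt_two_mul_eq_zero hw
  obtain ⟨hb, hc⟩ := mem_ker_toShear.1 k.2
  exact Subtype.ext (ShearGroup.ext hx hy hz hb hc)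

def kerCone : Set ShearGroup := (↑) '' (kerCoord ⁻¹' {h | 1 < h})

theorem kerCone_subset_ker : kerCone ⊆ toShear.ker := by
  rintro _ ⟨k, -, rfl⟩
  exact k.2

theorem mem_kerCone {q : ShearGroup} (hb : q.b = 0) (hc : q.c = 0) :
    q ∈ kerCone ↔ 0 < weight q ∨ weight q = 0 ∧ 0 < q.z := by
  have hq : q ∈ toShear.ker := mem_ker_toShear.2 ⟨hb, hc⟩
  refine ⟨?_, fun h => ⟨⟨q, hq⟩, ?_, rfl⟩⟩
  · rintro ⟨k, hk, rfl⟩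
    simpa [kerCoord, ← ofAdd_zero, Prod.Lex.lt_iff, eq_comm] using hk
  · simpa [kerCoord, ← ofAdd_zero, Prod.Lex.lt_iff, eq_comm] using h

theorem mem_conjCone_kerCone {B C : ℤ} {q : ShearGroup} (hb : q.b = 0) (hc : q.c = 0) :
    q ∈ conjCone ⟨0, 0, 0, B, C⟩ kerCone ↔
      0 < weight q + (C + √2 * B) * q.z ∨ weight q + (C + √2 * B) * q.z = 0 ∧ 0 < q.z := by
  rw [mem_conjCone, mul_mul_inv]
  simp only [hb, hc, mul_zero, sub_zero]
  rw [mem_kerCone rfl rfl]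
  simp only [weight]
  push_cast
  ring_nf

theorem isCondensedCone_kerCone : IsCondensedCone kerCone := by
  intro F hF
  have hev : ∀ᶠ ε in 𝓝[>] 0, ∀ q ∈ F, 0 < weight q + ε * q.z :=
    F.eventually_all.2 fun q hq => by
      obtain ⟨hb, hc⟩ := mem_ker_toShear.1 (kerCone_subset_ker (hF hq))
      exact eventually_pos_add_mul (by exact_mod_cast (mem_kerCone hb hc).1 (hF hq))
  obtain ⟨η, hη, hηε⟩ := mem_nhdsGT_iff_exists_Ioo_subset.1 hev
  obtain ⟨_, ⟨⟨C, B⟩, rfl⟩, hε, hεη⟩ := denseRange_int_add_sqrt_two_mul.exists_between hη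
  refine ⟨⟨0, 0, 0, B, C⟩, fun h => ?_, fun q hq => ?_⟩
  · -- an element with `z = 1` and weight in `(-ε, 0)` enters the conjugate but is not in `kerCone`
    obtain ⟨_, ⟨⟨m, n⟩, rfl⟩, hu, hu'⟩ :=
      denseRange_int_add_sqrt_two_mul.exists_between (neg_lt_zero.2 hε)
    have hw : weight ⟨m, n, 1, 0, 0⟩ = m + √2 * n := rfl
    have hmem : (⟨m, n, 1, 0, 0⟩ : ShearGroup) ∈ conjCone ⟨0, 0, 0, B, C⟩ kerCone :=
      (mem_conjCone_kerCone rfl rfl).2 (.inl (by rw [hw]; push_cast; linarith))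
    rw [h, mem_kerCone rfl rfl, hw] at hmem
    rcases hmem with hpos | ⟨hzero, -⟩ <;> linarith
  · obtain ⟨hb, hc⟩ := mem_ker_toShear.1 (kerCone_subset_ker (hF hq))
    exact (mem_conjCone_kerCone hb hc).2 (.inl (hηε ⟨hε, hεη⟩ q hq))

def cone : Set ShearGroup := toShear ⁻¹' {h | 1 < h} ∪ kerCone

theorem isPositiveCone_cone : IsPositiveCone cone :=
  isPositiveCone_setOf_one_lt.lex toShear
    (isPositiveCone_setOf_one_lt.preimage kerCoord kerCoord_injective)

theorem isCondensedCone_cone : IsCondensedCone cone :=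
  .preimage_union toShear (lt_irrefl 1) kerCone_subset_ker isCondensedCone_kerCone

end ShearGroup

/-- There is a finitely generated nilpotent group possessing a condensed positive cone. -/
theorem exists_nilpotent_group_with_condensed_cone :
    ∃ (G : Type) (_ : Group G), Group.FG G ∧ Group.IsNilpotent G ∧
      ∃ P : Set G, IsPositiveCone P ∧ IsCondensedCone P :=
  ⟨ShearGroup, inferInstance, ShearGroup.fg, ShearGroup.isNilpotent, ShearGroup.cone,
    ShearGroup.isPositiveCone_cone, ShearGroup.isCondensedCone_cone⟩
end

section
/- The group N₄ of 4×4 lower triangular integer matrices with all diagonal entries 1 admits a condensed positive cone: there exists a positive cone P of N₄ such that for every finite subset F ⊆ P there exists g ∈ N₄ with g⁻¹Pg ≠ P and F ⊆ g⁻¹Pg. (Equivalently, E_lo(N₄) is not smooth.) -/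
open Matrix

/-- The pattern of a lower unitriangular matrix: ones on the diagonal and zeros above
the diagonal. -/
def IsUniLower (k : ℕ) (M : Matrix (Fin k) (Fin k) ℤ) : Prop :=
  (∀ i, M i i = 1) ∧ ∀ i j : Fin k, i < j → M i j = 0

namespace IsUniLower

variable {k : ℕ}

lemma one (k : ℕ) : IsUniLower k 1 := by
  constructor
  · intro i; simp
  · intro i j hij; exact Matrix.one_apply_ne (Fin.ne_of_lt hij)

lemma mul {M N : Matrix (Fin k) (Fin k) ℤ}
    (hM : IsUniLower k M) (hN : IsUniLower k N) : IsUniLower k (M * N) := by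
  constructor
  · intro i
    rw [Matrix.mul_apply, Finset.sum_eq_single i]
    · rw [hM.1, hN.1, one_mul]
    · intro l _ hl
      rcases lt_or_gt_of_ne hl with h | h
      · rw [hN.2 l i h, mul_zero]
      · rw [hM.2 i l h, zero_mul]
    · intro hi; exact absurd (Finset.mem_univ i) hi
  · intro i j hij
    rw [Matrix.mul_apply, Finset.sum_eq_zero]
    intro l _
    rcases lt_or_ge i l with h | h
    · rw [hM.2 i l h, zero_mul]
    · rw [hN.2 l j (lt_of_le_of_lt h hij), mul_zero]

lemma pow_strictLower {X : Matrix (Fin k) (Fin k) ℤ}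
    (hX : ∀ i j : Fin k, (i : ℕ) ≤ (j : ℕ) → X i j = 0) :
    ∀ m : ℕ, ∀ i j : Fin k, (i : ℕ) < (j : ℕ) + m → (X ^ m) i j = 0 := by
  intro m
  induction m with
  | zero =>
    intro i j hij
    rw [pow_zero]
    exact Matrix.one_apply_ne (by intro h; subst h; omega)
  | succ m ih =>
    intro i j hij
    rw [pow_succ, Matrix.mul_apply, Finset.sum_eq_zero]
    intro l _
    rcases le_or_gt (l : ℕ) (j : ℕ) with h | h
    · rw [hX l j h, mul_zero]
    · rw [ih i l (by omega), zero_mul]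

lemma pow_eq_zero {X : Matrix (Fin k) (Fin k) ℤ}
    (hX : ∀ i j : Fin k, (i : ℕ) ≤ (j : ℕ) → X i j = 0) : X ^ k = 0 := by
  ext i j
  rw [Matrix.zero_apply]
  exact pow_strictLower hX k i j (by have := i.isLt; omega)

end IsUniLower

/-- The group `N_k` of `k × k` lower triangular integer matrices with all diagonal
entries equal to `1`, realized as a subgroup of the units of the matrix ring. -/
def Nk (k : ℕ) : Subgroup (Matrix (Fin k) (Fin k) ℤ)ˣ where
  carrier := {U | IsUniLower k U.val}
  one_mem' := IsUniLower.one k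
  mul_mem' hA hB := IsUniLower.mul hA hB
  inv_mem' := by
    intro U hU
    replace hU : IsUniLower k U.val := hU
    set M : Matrix (Fin k) (Fin k) ℤ := U.val with hMdef
    set X : Matrix (Fin k) (Fin k) ℤ := M - 1 with hXdef
    have hX : ∀ i j : Fin k, (i : ℕ) ≤ (j : ℕ) → X i j = 0 := by
      intro i j hij
      rcases eq_or_lt_of_le hij with h | h
      · have : i = j := Fin.ext h
        subst this
        simp [hXdef, Matrix.sub_apply, hU.1 i]
      · have hij' : i < j := h
        have hne : i ≠ j := Fin.ne_of_lt hij'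
        simp [hXdef, Matrix.sub_apply, hU.2 i j hij', Matrix.one_apply_ne hne]
    have hXneg : ∀ i j : Fin k, (i : ℕ) ≤ (j : ℕ) → (-X) i j = 0 := by
      intro i j hij; simp [hX i j hij]
    have hpow : (-X) ^ k = 0 := IsUniLower.pow_eq_zero hXneg
    set N : Matrix (Fin k) (Fin k) ℤ := ∑ j ∈ Finset.range k, (-X) ^ j with hNdef
    have hMX : M = X + 1 := by rw [hXdef]; abel
    have hNM : N * M = 1 := by
      have h1 : N * (-X - 1) = (-X) ^ k - 1 := geom_sum_mul (-X) k
      rw [hpow] at h1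
      have h2 : N * (-X - 1) = -(N * M) := by rw [hMX]; noncomm_ring
      rw [h2] at h1
      have := congrArg Neg.neg h1
      simpa using this
    have hMN : M * N = 1 := by
      have h1 : (-X - 1) * N = (-X) ^ k - 1 := mul_geom_sum (-X) k
      rw [hpow] at h1
      have h2 : (-X - 1) * N = -(M * N) := by rw [hMX]; noncomm_ring
      rw [h2] at h1
      have := congrArg Neg.neg h1
      simpa using this
    have hinv : (U⁻¹).val = N := Units.inv_eq_of_mul_eq_one_right hMN
    show IsUniLower k _
    rw [hinv]
    constructor
    · intro i
      have hk : 0 < k := i.pos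
      rw [hNdef, Matrix.sum_apply, Finset.sum_eq_single 0]
      · simp
      · intro m hm hm0
        exact IsUniLower.pow_strictLower hXneg m i i (by omega)
      · intro h; exact absurd (Finset.mem_range.mpr hk) h
    · intro i j hij
      rw [hNdef, Matrix.sum_apply, Finset.sum_eq_zero]
      intro m _
      exact IsUniLower.pow_strictLower hXneg m i j (by have : (i:ℕ) < (j:ℕ) := hij; omega)

/-! Order `N₄` lexicographically by three functionals, each additive on the kernel of the
previous ones: `φ = x₂ + ξ x₃` on the whole group, the entry `b` on `ker φ`, and
`ψ = ξ² x₁ + ξ a + c` on the abelian subgroup `ker φ ∩ ker b ≅ ℤ³`; for transcendental `ξ`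
each is injective where it is used, which gives a positive cone. Conjugation by the element
with `x₂ = n`, `b = m` fixes the first two levels and turns `ψ` into `ψ + (m + n ξ) x₁`. As
`m + n ξ` can be positive and arbitrarily small, these conjugates contain any finite subset of
the cone, yet they all differ from it. -/

section LexCone

variable {G A : Type*} [Group G] [AddCommGroup A] [LinearOrder A] [IsOrderedAddMonoid A]

structure IsPositiveConeIn (H : Subgroup G) (P : Set G) : Prop where
  subset : P ⊆ H
  mul_mem : ∀ {a b}, a ∈ P → b ∈ P → a * b ∈ P
  trichotomy : ∀ g ∈ H, g ∈ P ∨ g⁻¹ ∈ P ∨ g = 1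
  inv_notMem : ∀ {g}, g ∈ P → g⁻¹ ∉ P

theorem IsPositiveConeIn.one_notMem {H : Subgroup G} {P : Set G} (hP : IsPositiveConeIn H P) :
    (1 : G) ∉ P :=
  fun h => hP.inv_notMem h (by rwa [inv_one])

theorem IsPositiveConeIn.isPositiveCone {P : Set G} (hP : IsPositiveConeIn ⊤ P) :
    IsPositiveCone P :=
  ⟨fun _ ha _ hb => hP.mul_mem ha hb, fun g => hP.trichotomy g trivial,
    fun _ => hP.inv_notMem, hP.one_notMem⟩

theorem isPositiveConeIn_empty {H : Subgroup G} (hH : ∀ g ∈ H, g = 1) :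
    IsPositiveConeIn H ∅ :=
  ⟨Set.empty_subset _, fun h => h.elim, fun g hg => .inr (.inr (hH g hg)), fun h => h.elim⟩

namespace Subgroup

variable {H : Subgroup G} {f : G → A}

theorem map_one_of_additiveOn (hf : ∀ a ∈ H, ∀ b ∈ H, f (a * b) = f a + f b) : f 1 = 0 := by
  simpa using hf 1 H.one_mem 1 H.one_mem

theorem map_inv_of_additiveOn (hf : ∀ a ∈ H, ∀ b ∈ H, f (a * b) = f a + f b) {g : G}
    (hg : g ∈ H) : f g⁻¹ = -f g := by
  have := hf g hg g⁻¹ (H.inv_mem hg)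
  rw [mul_inv_cancel, map_one_of_additiveOn hf] at this
  exact eq_neg_of_add_eq_zero_right this.symm

def kerOn (H : Subgroup G) (f : G → A) (hf : ∀ a ∈ H, ∀ b ∈ H, f (a * b) = f a + f b) :
    Subgroup G where
  carrier := {g | g ∈ H ∧ f g = 0}
  one_mem' := ⟨H.one_mem, map_one_of_additiveOn hf⟩
  mul_mem' := fun ⟨ha, fa⟩ ⟨hb, fb⟩ => ⟨H.mul_mem ha hb, by rw [hf _ ha _ hb, fa, fb, add_zero]⟩
  inv_mem' := fun ⟨hg, fg⟩ => ⟨H.inv_mem hg, by rw [map_inv_of_additiveOn hf hg, fg, neg_zero]⟩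

theorem mem_kerOn {hf : ∀ a ∈ H, ∀ b ∈ H, f (a * b) = f a + f b} {g : G} :
    g ∈ H.kerOn f hf ↔ g ∈ H ∧ f g = 0 :=
  Iff.rfl

end Subgroup

open Subgroup in
theorem IsPositiveConeIn.lex {H : Subgroup G} {f : G → A}
    (hf : ∀ a ∈ H, ∀ b ∈ H, f (a * b) = f a + f b) {P : Set G}
    (hP : IsPositiveConeIn (H.kerOn f hf) P) :
    IsPositiveConeIn H ({g | g ∈ H ∧ 0 < f g} ∪ P) where
  subset := Set.union_subset (fun _ hg => hg.1) fun _ hg => (hP.subset hg).1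
  mul_mem := by
    rintro a b (⟨ha, fa⟩ | ha) (⟨hb, fb⟩ | hb)
    · exact .inl ⟨H.mul_mem ha hb, by rw [hf a ha b hb]; exact add_pos fa fb⟩
    · obtain ⟨hb, fb⟩ := hP.subset hb
      exact .inl ⟨H.mul_mem ha hb, by rwa [hf a ha b hb, fb, add_zero]⟩
    · obtain ⟨ha, fa⟩ := hP.subset ha
      exact .inl ⟨H.mul_mem ha hb, by rwa [hf a ha b hb, fa, zero_add]⟩
    · exact .inr (hP.mul_mem ha hb)
  trichotomy g hg := by
    rcases lt_trichotomy (f g) 0 with h | h | h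
    · exact .inr (.inl (.inl ⟨H.inv_mem hg, by rwa [map_inv_of_additiveOn hf hg, neg_pos]⟩))
    · rcases hP.trichotomy g ⟨hg, h⟩ with h' | h' | h'
      exacts [.inl (.inr h'), .inr (.inl (.inr h')), .inr (.inr h')]
    · exact .inl (.inl ⟨hg, h⟩)
  inv_notMem := by
    rintro g (⟨hg, fg⟩ | hgP) (⟨-, fg'⟩ | hgP')
    · rw [map_inv_of_additiveOn hf hg] at fg'
      exact (neg_pos.1 fg').not_gt fg
    · exact fg.ne' (by simpa [map_inv_of_additiveOn hf hg] using (hP.subset hgP').2)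
    · obtain ⟨hg, fg⟩ := hP.subset hgP
      exact fg'.ne' (by rw [map_inv_of_additiveOn hf hg, fg, neg_zero])
    · exact hP.inv_notMem hgP hgP'

theorem mem_conjCone_iff {g q : G} {P : Set G} : q ∈ conjCone g P ↔ g * q * g⁻¹ ∈ P :=
  ⟨by rintro ⟨p, hp, rfl⟩; simpa [mul_assoc] using hp, fun h => ⟨_, h, by group⟩⟩

end LexCone

open Polynomial in
theorem Transcendental.eq_zero_of_sq_mul_add_mul_add_eq_zero {ξ : ℝ} (hξ : Transcendental ℤ ξ)
    {x a c : ℤ} (h : ξ ^ 2 * x + ξ * a + c = 0) : x = 0 ∧ a = 0 ∧ c = 0 := by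
  have hp := transcendental_iff.1 hξ (C x * X ^ 2 + C a * X + C c) (by
    simp only [map_add, map_mul, map_pow, aeval_C, aeval_X, algebraMap_int_eq]
    simp only [eq_intCast]
    linear_combination h)
  refine ⟨?_, ?_, ?_⟩
  · simpa [-eq_intCast, coeff_X, coeff_C] using congrArg (coeff · 2) hp
  · simpa [-eq_intCast, coeff_X, coeff_C] using congrArg (coeff · 1) hp
  · simpa [-eq_intCast, coeff_X, coeff_C] using congrArg (coeff · 0) hp

theorem Transcendental.irrational_of_int {ξ : ℝ} (hξ : Transcendental ℤ ξ) : Irrational ξ :=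
  Transcendental.irrational ((IsFractionRing.isAlgebraic_iff ℤ ℚ ℝ).not.1 hξ)

theorem exists_int_add_int_mul_mem_Ioo {ξ : ℝ} (hξ : Irrational ξ) {lo hi : ℝ} (h : lo < hi) :
    ∃ m n : ℤ, (m : ℝ) + n * ξ ∈ Set.Ioo lo hi := by
  have hd : Dense (AddSubgroup.closure {1, ξ} : Set ℝ) :=
    dense_addSubgroupClosure_pair_iff.2 (by simpa using hξ.inv)
  obtain ⟨_, hx, hmem⟩ := hd.exists_mem_open isOpen_Ioo (Set.nonempty_Ioo.2 h)
  obtain ⟨m, n, rfl⟩ := AddSubgroup.mem_closure_pair.1 hx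
  exact ⟨m, n, by simpa using hmem⟩

namespace N4

open Filter Topology

def mat (x₁ x₂ x₃ a b c : ℤ) : Matrix (Fin 4) (Fin 4) ℤ :=
  !![1, 0, 0, 0; x₁, 1, 0, 0; a, x₂, 1, 0; c, b, x₃, 1]

theorem mat_mul (x₁ x₂ x₃ a b c y₁ y₂ y₃ d e f : ℤ) :
    mat x₁ x₂ x₃ a b c * mat y₁ y₂ y₃ d e f =
      mat (x₁ + y₁) (x₂ + y₂) (x₃ + y₃) (a + d + x₂ * y₁) (b + e + x₃ * y₂)
        (c + f + b * y₁ + x₃ * d) := by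
  ext i j
  fin_cases i <;> fin_cases j <;> simp [mat, Matrix.mul_apply, Fin.sum_univ_succ] <;> ring

theorem mat_zero : mat 0 0 0 0 0 0 = 1 := by
  ext i j
  fin_cases i <;> fin_cases j <;> rfl

theorem mat_mul_mat_inv (x₁ x₂ x₃ a b c : ℤ) :
    mat x₁ x₂ x₃ a b c *
      mat (-x₁) (-x₂) (-x₃) (x₂ * x₁ - a) (x₃ * x₂ - b) (-c + b * x₁ + x₃ * a - x₃ * x₂ * x₁) =
        1 := by
  rw [mat_mul, ← mat_zero]
  congr 1 <;> ring

theorem mat_inv_mul_mat (x₁ x₂ x₃ a b c : ℤ) :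
    mat (-x₁) (-x₂) (-x₃) (x₂ * x₁ - a) (x₃ * x₂ - b) (-c + b * x₁ + x₃ * a - x₃ * x₂ * x₁) *
      mat x₁ x₂ x₃ a b c = 1 := by
  rw [mat_mul, ← mat_zero]
  congr 1 <;> ring

theorem isUniLower_mat (x₁ x₂ x₃ a b c : ℤ) : IsUniLower 4 (mat x₁ x₂ x₃ a b c) := by
  refine ⟨fun i => ?_, fun i j hij => ?_⟩
  · fin_cases i <;> rfl
  · fin_cases i <;> fin_cases j <;> first | rfl | exact absurd hij (by decide)

def mk (x₁ x₂ x₃ a b c : ℤ) : Nk 4 :=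
  ⟨⟨mat x₁ x₂ x₃ a b c,
    mat (-x₁) (-x₂) (-x₃) (x₂ * x₁ - a) (x₃ * x₂ - b) (-c + b * x₁ + x₃ * a - x₃ * x₂ * x₁),
    mat_mul_mat_inv .., mat_inv_mul_mat ..⟩, isUniLower_mat ..⟩

theorem mk_zero : mk 0 0 0 0 0 0 = 1 :=
  Subtype.ext (Units.ext mat_zero)

theorem exists_eq_mk (U : Nk 4) : ∃ x₁ x₂ x₃ a b c, U = mk x₁ x₂ x₃ a b c := by
  obtain ⟨hd, hu⟩ : IsUniLower 4 U.val.val := U.2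
  refine ⟨U.val.val 1 0, U.val.val 2 1, U.val.val 3 2, U.val.val 2 0, U.val.val 3 1,
    U.val.val 3 0, Subtype.ext (Units.ext ?_)⟩
  ext i j
  fin_cases i <;> fin_cases j <;> first | rfl | exact hd _ | exact hu _ _ (by decide)

theorem mk_mul_mk (x₁ x₂ x₃ a b c y₁ y₂ y₃ d e f : ℤ) :
    mk x₁ x₂ x₃ a b c * mk y₁ y₂ y₃ d e f =
      mk (x₁ + y₁) (x₂ + y₂) (x₃ + y₃) (a + d + x₂ * y₁) (b + e + x₃ * y₂)
        (c + f + b * y₁ + x₃ * d) :=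
  Subtype.ext (Units.ext (mat_mul ..))

theorem conj_mk (n m x₁ x₂ x₃ a b c : ℤ) :
    mk 0 n 0 0 m 0 * mk x₁ x₂ x₃ a b c * (mk 0 n 0 0 m 0)⁻¹ =
      mk x₁ x₂ x₃ (a + n * x₁) (b - n * x₃) (c + m * x₁) := by
  have hinv : (mk 0 n 0 0 m 0)⁻¹ = mk 0 (-n) 0 0 (-m) 0 :=
    inv_eq_of_mul_eq_one_right (by rw [mk_mul_mk, ← mk_zero]; congr 1 <;> ring)
  rw [hinv, mk_mul_mk, mk_mul_mk]
  congr 1 <;> ring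

variable (ξ : ℝ)

noncomputable def φ (U : Nk 4) : ℝ := U.val.val 2 1 + ξ * U.val.val 3 2

def β (U : Nk 4) : ℤ := U.val.val 3 1

noncomputable def ψ (U : Nk 4) : ℝ := ξ ^ 2 * U.val.val 1 0 + ξ * U.val.val 2 0 + U.val.val 3 0

/-- `cone ξ 0` is ordered lexicographically by `φ ξ`, `β` and `ψ ξ`; for `δ = m + n ξ`,
`cone ξ δ` is its conjugate by `mk 0 n 0 0 m 0`. -/
def cone (δ : ℝ) : Set (Nk 4) :=
  {U | 0 < φ ξ U ∨ (φ ξ U = 0 ∧ 0 < β U) ∨ (φ ξ U = 0 ∧ β U = 0 ∧ 0 < ψ ξ U + δ * U.val.val 1 0)}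

theorem mk_val_one_zero (x₁ x₂ x₃ a b c : ℤ) : (mk x₁ x₂ x₃ a b c).val.val 1 0 = x₁ := rfl

theorem φ_mk (x₁ x₂ x₃ a b c : ℤ) : φ ξ (mk x₁ x₂ x₃ a b c) = x₂ + ξ * x₃ := rfl

theorem β_mk (x₁ x₂ x₃ a b c : ℤ) : β (mk x₁ x₂ x₃ a b c) = b := rfl

theorem ψ_mk (x₁ x₂ x₃ a b c : ℤ) : ψ ξ (mk x₁ x₂ x₃ a b c) = ξ ^ 2 * x₁ + ξ * a + c := rfl

theorem φ_mul (U V : Nk 4) : φ ξ (U * V) = φ ξ U + φ ξ V := by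
  obtain ⟨x₁, x₂, x₃, a, b, c, rfl⟩ := exists_eq_mk U
  obtain ⟨y₁, y₂, y₃, d, e, f, rfl⟩ := exists_eq_mk V
  rw [mk_mul_mk, φ_mk, φ_mk, φ_mk]
  push_cast
  ring

variable {ξ}

theorem φ_eq_zero_iff (hξ : Transcendental ℤ ξ) {U : Nk 4} :
    φ ξ U = 0 ↔ U.val.val 2 1 = 0 ∧ U.val.val 3 2 = 0 := by
  refine ⟨fun h => ?_, fun ⟨h₂, h₃⟩ => by simp [φ, h₂, h₃]⟩
  obtain ⟨-, h₃, h₂⟩ := hξ.eq_zero_of_sq_mul_add_mul_add_eq_zero (x := 0)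
    (show ξ ^ 2 * (0 : ℤ) + ξ * U.val.val 3 2 + U.val.val 2 1 = 0 by rw [← h, φ]; push_cast; ring)
  exact ⟨h₂, h₃⟩

theorem β_mul {U : Nk 4} (hU : U.val.val 3 2 = 0) (V : Nk 4) : β (U * V) = β U + β V := by
  obtain ⟨x₁, x₂, x₃, a, b, c, rfl⟩ := exists_eq_mk U
  obtain ⟨y₁, y₂, y₃, d, e, f, rfl⟩ := exists_eq_mk V
  change x₃ = 0 at hU
  rw [mk_mul_mk, β_mk, β_mk, β_mk, hU, zero_mul, add_zero]

theorem ψ_mul {U : Nk 4} (hU : U.val.val 2 1 = 0 ∧ U.val.val 3 2 = 0 ∧ U.val.val 3 1 = 0)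
    (V : Nk 4) : ψ ξ (U * V) = ψ ξ U + ψ ξ V := by
  obtain ⟨x₁, x₂, x₃, a, b, c, rfl⟩ := exists_eq_mk U
  obtain ⟨y₁, y₂, y₃, d, e, f, rfl⟩ := exists_eq_mk V
  obtain ⟨hx₂, hx₃, hb⟩ : x₂ = 0 ∧ x₃ = 0 ∧ b = 0 := hU
  rw [mk_mul_mk, ψ_mk, ψ_mk, ψ_mk, hx₂, hx₃, hb]
  push_cast
  ring

theorem eq_one_of_ψ_eq_zero (hξ : Transcendental ℤ ξ) {U : Nk 4}
    (hU : U.val.val 2 1 = 0 ∧ U.val.val 3 2 = 0 ∧ U.val.val 3 1 = 0) (hψ : ψ ξ U = 0) : U = 1 := by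
  obtain ⟨x₁, x₂, x₃, a, b, c, rfl⟩ := exists_eq_mk U
  obtain ⟨rfl, rfl, rfl⟩ : x₂ = 0 ∧ x₃ = 0 ∧ b = 0 := hU
  obtain ⟨rfl, rfl, rfl⟩ := hξ.eq_zero_of_sq_mul_add_mul_add_eq_zero hψ
  exact mk_zero

open Subgroup in
theorem isPositiveCone_cone (hξ : Transcendental ℤ ξ) : IsPositiveCone (cone ξ 0) := by
  have hφ : ∀ U ∈ (⊤ : Subgroup (Nk 4)), ∀ V ∈ (⊤ : Subgroup (Nk 4)),
      φ ξ (U * V) = φ ξ U + φ ξ V := fun U _ V _ => φ_mul ξ U V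
  set K₁ := (⊤ : Subgroup (Nk 4)).kerOn (φ ξ) hφ
  have hK₁ {U : Nk 4} : U ∈ K₁ ↔ φ ξ U = 0 := mem_kerOn.trans (and_iff_right (mem_top U))
  have hβ : ∀ U ∈ K₁, ∀ V ∈ K₁, β (U * V) = β U + β V :=
    fun U hU V _ => β_mul ((φ_eq_zero_iff hξ).1 (hK₁.1 hU)).2 V
  set K₂ := K₁.kerOn β hβ
  have hK₂ {U : Nk 4} : U ∈ K₂ ↔ φ ξ U = 0 ∧ β U = 0 := mem_kerOn.trans (and_congr_left' hK₁)
  have entries {U : Nk 4} (hU : U ∈ K₂) :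
      U.val.val 2 1 = 0 ∧ U.val.val 3 2 = 0 ∧ U.val.val 3 1 = 0 :=
    and_assoc.1 ⟨(φ_eq_zero_iff hξ).1 (hK₂.1 hU).1, (hK₂.1 hU).2⟩
  have hψ : ∀ U ∈ K₂, ∀ V ∈ K₂, ψ ξ (U * V) = ψ ξ U + ψ ξ V :=
    fun U hU V _ => ψ_mul (entries hU) V
  have hP := (((isPositiveConeIn_empty fun U hU =>
    eq_one_of_ψ_eq_zero hξ (entries (mem_kerOn.1 hU).1) (mem_kerOn.1 hU).2).lex hψ).lex hβ).lex hφ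
  convert hP.isPositiveCone using 1
  ext U
  simp only [cone, zero_mul, add_zero, Set.mem_ofPred_eq, Set.mem_union, Subgroup.mem_top, true_and,
    hK₁, hK₂, Set.mem_empty_iff_false, or_false, and_assoc]

theorem conjCone_mk (hξ : Transcendental ℤ ξ) (n m : ℤ) :
    conjCone (mk 0 n 0 0 m 0) (cone ξ 0) = cone ξ (m + n * ξ) := by
  ext U
  obtain ⟨x₁, x₂, x₃, a, b, c, rfl⟩ := exists_eq_mk U
  rw [mem_conjCone_iff, conj_mk]
  simp only [cone, Set.mem_ofPred_eq, φ_mk, β_mk, ψ_mk, mk_val_one_zero, zero_mul, add_zero]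
  by_cases hφ : (x₂ : ℝ) + ξ * x₃ = 0
  · obtain ⟨-, rfl⟩ : x₂ = 0 ∧ x₃ = 0 := (φ_eq_zero_iff hξ (U := mk x₁ x₂ x₃ a b c)).1 hφ
    have hψ : ξ ^ 2 * x₁ + ξ * ↑(a + n * x₁) + ↑(c + m * x₁) =
        ξ ^ 2 * x₁ + ξ * a + c + (m + n * ξ) * x₁ := by push_cast; ring
    rw [hψ, mul_zero, sub_zero]
  · simp only [hφ, false_and, or_false]

theorem cone_ne_cone_zero (hξ : Irrational ξ) {δ : ℝ} (hδ : 0 < δ) : cone ξ δ ≠ cone ξ 0 := by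
  obtain ⟨m, n, hlo, hhi⟩ := exists_int_add_int_mul_mem_Ioo hξ (lt_add_of_pos_right (ξ ^ 2) hδ)
  have hmem : mk (-1) 0 0 n 0 m ∈ cone ξ 0 := .inr (.inr ⟨by simp [φ_mk], rfl, by
    rw [ψ_mk]; push_cast; linarith⟩)
  intro h
  rw [← h] at hmem
  rcases hmem with h | ⟨-, h⟩ | ⟨-, -, h⟩
  · simp [φ_mk] at h
  · exact h.ne' rfl
  · rw [ψ_mk, mk_val_one_zero] at h; push_cast at h; linarith

theorem eventually_mem_cone {U : Nk 4} (hU : U ∈ cone ξ 0) : ∀ᶠ δ in 𝓝 0, U ∈ cone ξ δ := by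
  rcases hU with h | h | ⟨hφ, hβ, hψ⟩
  · exact .of_forall fun _ => .inl h
  · exact .of_forall fun _ => .inr (.inl h)
  · have hcont : Continuous fun δ : ℝ => ψ ξ U + δ * U.val.val 1 0 := by fun_prop
    exact (hcont.tendsto 0).eventually (eventually_gt_nhds hψ) |>.mono
      fun δ hδ => .inr (.inr ⟨hφ, hβ, hδ⟩)

theorem eventually_subset_cone {F : Finset (Nk 4)} (hF : ↑F ⊆ cone ξ 0) :
    ∀ᶠ δ in 𝓝 0, ↑F ⊆ cone ξ δ :=
  (eventually_all_finset F).2 fun _ hU => eventually_mem_cone (hF hU)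

end N4

/-- The group `N₄` of `4 × 4` lower unitriangular integer matrices admits a condensed
positive cone. -/
theorem N4_has_condensed_cone :
    ∃ P : Set ↥(Nk 4), IsPositiveCone P ∧ IsCondensedCone P := by
  have hξ : Transcendental ℤ (liouvilleNumber 3) := by
    simpa using transcendental_liouvilleNumber (m := 3) (by norm_num)
  refine ⟨N4.cone (liouvilleNumber 3) 0, N4.isPositiveCone_cone hξ, fun F hF => ?_⟩
  obtain ⟨ε, hε, hsub⟩ := Metric.eventually_nhds_iff.1 (N4.eventually_subset_cone hF)
  obtain ⟨m, n, hpos, hlt⟩ := exists_int_add_int_mul_mem_Ioo hξ.irrational_of_int hε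
  refine ⟨N4.mk 0 n 0 0 m 0, ?_, ?_⟩ <;> rw [N4.conjCone_mk hξ]
  · exact N4.cone_ne_cone_zero hξ.irrational_of_int hpos
  · exact hsub (by rwa [Real.dist_0_eq_abs, abs_of_pos hpos])
end
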